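/- Let m ≥ 1 be an integer, g, Δ, ε real, λ := 2m − g² − 1 + ε, and μ := (λ+g²)² − 4g²(λ+g²) − Δ². Consider the non-spherical principal series action ϖ_{2,a} with a = 1−2m, and let K be the operator (½H − E + (3/2 − m))∘(F + 4g²) + (1 − m − ε)(H − ½) + (μ + 4εg² − ε²) on V, and Λ := 4g²(a/2 + 3/2 − m) + (1 − m − ε)(a − ½). Then for every finitely supported family (b_n)_{n∈ℤ} of complex numbers with b_n = 0 unless −m ≤ n ≤ m−1, the vector ν = Σ_n b_n e_n satisfies Kν = Λν if and only if for every n ∈ ℤ: (m+n+1)(m−n−2)·b_{n+1} + [(m−n−1)² − 4g²(m−n−1) − Δ² + 2ε(m−n−1)]·b_n + 4g²(m−n)·b_{n−1} = 0. -/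

import Mathlib

/-- The space `V` of finitely supported functions `ℤ → ℂ`. -/
abbrev Vsl2 : Type := ℤ →₀ ℂ

/-- The standard basis vectors `e n` of `V`. -/
noncomputable def eV (n : ℤ) : Vsl2 := Finsupp.single n 1

/-- The operator `H` of the spherical principal series `ϖ_{1,a}`: `H e_n = 2n·e_n`. -/
noncomputable def Hsph : Vsl2 →ₗ[ℂ] Vsl2 :=
  Finsupp.lsum ℂ fun n => (2 * (n : ℂ)) • Finsupp.lsingle n

/-- The operator `E` of the spherical principal series `ϖ_{1,a}`: `E e_n = (n + a/2)·e_{n+1}`. -/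
noncomputable def Esph (a : ℂ) : Vsl2 →ₗ[ℂ] Vsl2 :=
  Finsupp.lsum ℂ fun n => ((n : ℂ) + a / 2) • Finsupp.lsingle (n + 1)

/-- The operator `F` of the spherical principal series `ϖ_{1,a}`: `F e_n = (−n + a/2)·e_{n−1}`. -/
noncomputable def Fsph (a : ℂ) : Vsl2 →ₗ[ℂ] Vsl2 :=
  Finsupp.lsum ℂ fun n => (-(n : ℂ) + a / 2) • Finsupp.lsingle (n - 1)

/-- The operator `H` of the non-spherical principal series `ϖ_{2,a}`: `H e_n = (2n+1)·e_n`. -/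
noncomputable def Hnsph : Vsl2 →ₗ[ℂ] Vsl2 :=
  Finsupp.lsum ℂ fun n => (2 * (n : ℂ) + 1) • Finsupp.lsingle n

/-- The operator `E` of the non-spherical principal series `ϖ_{2,a}`:
`E e_n = (n + (a+1)/2)·e_{n+1}`. -/
noncomputable def Ensph (a : ℂ) : Vsl2 →ₗ[ℂ] Vsl2 :=
  Finsupp.lsum ℂ fun n => ((n : ℂ) + (a + 1) / 2) • Finsupp.lsingle (n + 1)

/-- The operator `F` of the non-spherical principal series `ϖ_{2,a}`:
`F e_n = (−n + (a−1)/2)·e_{n−1}`. -/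
noncomputable def Fnsph (a : ℂ) : Vsl2 →ₗ[ℂ] Vsl2 :=
  Finsupp.lsum ℂ fun n => (-(n : ℂ) + (a - 1) / 2) • Finsupp.lsingle (n - 1)

/-- The operator `(½H − E + α)∘(F + β) + γ(H − ½) + C` built from operators `Hop`, `Eop`,
`Fop` on `V`, scalars acting as scalar multiples of the identity. -/
noncomputable def Kop (Hop Eop Fop : Vsl2 →ₗ[ℂ] Vsl2) (α β γ C : ℂ) : Vsl2 →ₗ[ℂ] Vsl2 :=
  ((1 / 2 : ℂ) • Hop - Eop + α • LinearMap.id) ∘ₗ (Fop + β • LinearMap.id) +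
    γ • (Hop - (1 / 2 : ℂ) • LinearMap.id) + C • LinearMap.id

theorem Finsupp.lsum_smul_lsingle_equiv_apply {α R : Type*} [CommSemiring R] (σ : α ≃ α)
    (c : α → R) (ν : α →₀ R) (k : α) :
    (Finsupp.lsum R (fun n => c n • Finsupp.lsingle (σ n)) : (α →₀ R) →ₗ[R] α →₀ R) ν k =
      c (σ.symm k) * ν (σ.symm k) := by
  rw [Finsupp.lsum_apply, Finsupp.sum_apply, Finsupp.sum_eq_single (σ.symm k)]
  · simp
  · intro j _ hj
    simp [← σ.eq_symm_apply, hj]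
  · simp

theorem Hnsph_apply (ν : Vsl2) (k : ℤ) : Hnsph ν k = (2 * (k : ℂ) + 1) * ν k :=
  Finsupp.lsum_smul_lsingle_equiv_apply (Equiv.refl ℤ) _ ν k

theorem Ensph_apply (a : ℂ) (ν : Vsl2) (k : ℤ) :
    Ensph a ν k = ((k : ℂ) - 1 + (a + 1) / 2) * ν (k - 1) := by
  refine (Finsupp.lsum_smul_lsingle_equiv_apply (Equiv.addRight 1)
    (fun n : ℤ => (n : ℂ) + (a + 1) / 2) ν k).trans ?_
  simp [sub_eq_add_neg]

theorem Fnsph_apply (a : ℂ) (ν : Vsl2) (k : ℤ) :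
    Fnsph a ν k = (-((k : ℂ) + 1) + (a - 1) / 2) * ν (k + 1) := by
  refine (Finsupp.lsum_smul_lsingle_equiv_apply (Equiv.subRight 1)
    (fun n : ℤ => -(n : ℂ) + (a - 1) / 2) ν k).trans ?_
  simp

theorem Kop_nonspherical_apply (a α β γ C : ℂ) (ν : Vsl2) (n : ℤ) :
    Kop Hnsph (Ensph a) (Fnsph a) α β γ C ν n =
      (n + 1 / 2 + α) * (-(n + 1) + (a - 1) / 2) * ν (n + 1) +
        ((n + 1 / 2 + α) * β - (n - 1 + (a + 1) / 2) * (-n + (a - 1) / 2) +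
          γ * (2 * n + 1 / 2) + C) * ν n -
        (n - 1 + (a + 1) / 2) * β * ν (n - 1) := by
  simp only [Kop, LinearMap.add_apply, LinearMap.comp_apply, LinearMap.sub_apply,
    LinearMap.smul_apply, LinearMap.id_apply, Finsupp.add_apply, Finsupp.sub_apply,
    Finsupp.smul_apply, Hnsph_apply, Ensph_apply, Fnsph_apply, smul_eq_mul, sub_add_cancel]
  push_cast
  ring

theorem nonspherical_K_eigenproblem_general (m : ℤ) (g Δ ε : ℝ)
    (lam : ℝ) (hlam : lam = 2 * m - g ^ 2 - 1 + ε)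
    (μ : ℝ) (hμ : μ = (lam + g ^ 2) ^ 2 - 4 * g ^ 2 * (lam + g ^ 2) - Δ ^ 2)
    (a : ℝ) (ha : a = 1 - 2 * m)
    (K : Vsl2 →ₗ[ℂ] Vsl2)
    (hK : K = Kop Hnsph (Ensph (a : ℂ)) (Fnsph (a : ℂ))
      (3 / 2 - (m : ℂ)) ((4 * g ^ 2 : ℝ) : ℂ) ((1 - (m : ℝ) - ε : ℝ) : ℂ)
      ((μ + 4 * ε * g ^ 2 - ε ^ 2 : ℝ) : ℂ))
    (Λ : ℝ) (hΛ : Λ = 4 * g ^ 2 * (a / 2 + 3 / 2 - m) + (1 - m - ε) * (a - 1 / 2))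
    (ν : Vsl2) :
    K ν = (Λ : ℂ) • ν ↔
      ∀ n : ℤ,
        ((m : ℂ) + n + 1) * ((m : ℂ) - n - 2) * ν (n + 1) +
          (((m : ℂ) - n - 1) ^ 2 - 4 * (g : ℂ) ^ 2 * ((m : ℂ) - n - 1) - (Δ : ℂ) ^ 2 +
            2 * (ε : ℂ) * ((m : ℂ) - n - 1)) * ν n +
          4 * (g : ℂ) ^ 2 * ((m : ℂ) - n) * ν (n - 1) = 0 := by
  subst hlam hμ ha hΛ hK
  refine Finsupp.ext_iff.trans (forall_congr' fun n => ?_)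
  rw [Finsupp.smul_apply, smul_eq_mul, Kop_nonspherical_apply]
  push_cast
  -- `(K - Λ) ν` at `n` is exactly the left-hand side of the recurrence.
  constructor <;> intro h <;> linear_combination h

/-- Non-spherical `ϖ_{2,1−2m}`-eigenproblem on `F_{2m}` (the case `λ = 2m − g² − 1 + ε`):
the eigenvalue equation `Kν = Λν` for `ν = Σ b_n e_n` supported in `−m ≤ n ≤ m−1` is
equivalent to the three-term recurrence
`(m+n+1)(m−n−2)b_{n+1} + [(m−n−1)² − 4g²(m−n−1) − Δ² + 2ε(m−n−1)]b_n + 4g²(m−n)b_{n−1} = 0`. -/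
theorem nonspherical_K_eigenproblem (m : ℤ) (hm : 1 ≤ m) (g Δ ε : ℝ)
    (lam : ℝ) (hlam : lam = 2 * m - g ^ 2 - 1 + ε)
    (μ : ℝ) (hμ : μ = (lam + g ^ 2) ^ 2 - 4 * g ^ 2 * (lam + g ^ 2) - Δ ^ 2)
    (a : ℝ) (ha : a = 1 - 2 * m)
    (K : Vsl2 →ₗ[ℂ] Vsl2)
    (hK : K = Kop Hnsph (Ensph (a : ℂ)) (Fnsph (a : ℂ))
      (3 / 2 - (m : ℂ)) ((4 * g ^ 2 : ℝ) : ℂ) ((1 - (m : ℝ) - ε : ℝ) : ℂ)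
      ((μ + 4 * ε * g ^ 2 - ε ^ 2 : ℝ) : ℂ))
    (Λ : ℝ) (hΛ : Λ = 4 * g ^ 2 * (a / 2 + 3 / 2 - m) + (1 - m - ε) * (a - 1 / 2))
    (ν : Vsl2) (hsupp : ∀ n : ℤ, (n < -m ∨ m - 1 < n) → ν n = 0) :
    K ν = (Λ : ℂ) • ν ↔
      ∀ n : ℤ,
        ((m : ℂ) + n + 1) * ((m : ℂ) - n - 2) * ν (n + 1) +
          (((m : ℂ) - n - 1) ^ 2 - 4 * (g : ℂ) ^ 2 * ((m : ℂ) - n - 1) - (Δ : ℂ) ^ 2 +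
            2 * (ε : ℂ) * ((m : ℂ) - n - 1)) * ν n +
          4 * (g : ℂ) ^ 2 * ((m : ℂ) - n) * ν (n - 1) = 0 :=
  nonspherical_K_eigenproblem_general m g Δ ε lam hlam μ hμ a ha K hK Λ hΛ ν
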